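/- For every continuously differentiable w : [0,T] → V and every t ∈ [0,T], the error of the Galerkin (multiscale) semi-discrete solution satisfies ‖u(t) − u_ms(t)‖_C² + ∫_0^t ‖u(s) − u_ms(s)‖_L² ds ≤ 2 e^t ( ‖w(0) − u_ms(0)‖_C² + ∫_0^t ( ‖w'(s) − u'(s)‖_C² + ‖w(s) − u(s)‖_L² ) ds ) + 2 ‖w(t) − u(t)‖_C² + 2 ∫_0^t ‖w(s) − u(s)‖_L² ds. -/

import Mathlib

/-!
Write `e = w - u_ms`, which lies in `V`, and `ρ = w - u`. Testing the Galerkin equations with `e`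
and subtracting the fine-scale equation gives the orthogonality `eᵀ (C (e' - ρ') + L (e - ρ)) = 0`,
so by Young's inequality the energy `φ = ‖e‖_C² + ∫₀ᵗ ‖e‖_L²` satisfies
`φ' ≤ φ + ‖ρ'‖_C² + ‖ρ‖_L²`. Gronwall's inequality gives
`φ(t) ≤ eᵗ (φ(0) + ∫₀ᵗ (‖ρ'‖_C² + ‖ρ‖_L²))`, and `u - u_ms = e - ρ` together with
`‖a - b‖² ≤ 2 ‖a‖² + 2 ‖b‖²` turns this into the estimate.
-/

open Matrix Set

section QuadraticForm

variable {n : Type*} [Fintype n] {M : Matrix n n ℝ}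

lemma Matrix.IsHermitian.dotProduct_mulVec_comm (hM : M.IsHermitian) (x y : n → ℝ) :
    x ⬝ᵥ (M *ᵥ y) = y ⬝ᵥ (M *ᵥ x) := by
  rw [dotProduct_mulVec, ← mulVec_transpose, (isHermitian_iff_isSymm.1 hM).eq, dotProduct_comm]

lemma Matrix.PosSemidef.dotProduct_mulVec_self_nonneg (hM : M.PosSemidef) (x : n → ℝ) :
    0 ≤ x ⬝ᵥ (M *ᵥ x) := by
  simpa using hM.dotProduct_mulVec_nonneg x

lemma Matrix.PosSemidef.two_mul_dotProduct_mulVec_le (hM : M.PosSemidef) (x y : n → ℝ) :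
    2 * (x ⬝ᵥ (M *ᵥ y)) ≤ x ⬝ᵥ (M *ᵥ x) + y ⬝ᵥ (M *ᵥ y) := by
  have h := hM.dotProduct_mulVec_self_nonneg (x - y)
  have hcomm := hM.isHermitian.dotProduct_mulVec_comm x y
  simp only [mulVec_sub, dotProduct_sub, sub_dotProduct] at h
  linarith

lemma Matrix.PosSemidef.dotProduct_mulVec_sub_self_le (hM : M.PosSemidef) (x y : n → ℝ) :
    (x - y) ⬝ᵥ (M *ᵥ (x - y)) ≤ 2 * (x ⬝ᵥ (M *ᵥ x)) + 2 * (y ⬝ᵥ (M *ᵥ y)) := by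
  have h := hM.dotProduct_mulVec_self_nonneg (x + y)
  have hcomm := hM.isHermitian.dotProduct_mulVec_comm x y
  simp only [mulVec_sub, mulVec_add, dotProduct_sub, dotProduct_add, sub_dotProduct,
    add_dotProduct] at h ⊢
  linarith

lemma Matrix.PosSemidef.integral_dotProduct_mulVec_sub_self_le (hM : M.PosSemidef)
    {x y : ℝ → n → ℝ} {a b : ℝ} (hab : a ≤ b) (hx : ContinuousOn x (Icc a b))
    (hy : ContinuousOn y (Icc a b)) :
    ∫ s in a..b, (x s - y s) ⬝ᵥ (M *ᵥ (x s - y s)) ≤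
      2 * (∫ s in a..b, x s ⬝ᵥ (M *ᵥ x s)) + 2 * ∫ s in a..b, y s ⬝ᵥ (M *ᵥ y s) := by
  have hint : ∀ z : ℝ → n → ℝ, ContinuousOn z (Icc a b) →
      IntervalIntegrable (fun s => 2 * (z s ⬝ᵥ (M *ᵥ z s))) MeasureTheory.volume a b := by
    intro z hz
    exact ContinuousOn.intervalIntegrable_of_Icc hab (by fun_prop)
  have h := intervalIntegral.integral_mono_on hab
    (ContinuousOn.intervalIntegrable_of_Icc hab (by fun_prop)) ((hint x hx).add (hint y hy))
    fun s _ => hM.dotProduct_mulVec_sub_self_le (x s) (y s)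
  rw [intervalIntegral.integral_add (hint x hx) (hint y hy),
    intervalIntegral.integral_const_mul, intervalIntegral.integral_const_mul] at h
  exact h

end QuadraticForm

section Calculus

variable {n : Type*} [Fintype n]

lemma HasDerivWithinAt.dotProduct {v w : ℝ → n → ℝ} {v' w' : n → ℝ} {s : Set ℝ} {t : ℝ}
    (hv : HasDerivWithinAt v v' s t) (hw : HasDerivWithinAt w w' s t) :
    HasDerivWithinAt (fun τ => v τ ⬝ᵥ w τ) (v' ⬝ᵥ w t + v t ⬝ᵥ w') s t := by
  rw [_root_.dotProduct, _root_.dotProduct, ← Finset.sum_add_distrib]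
  exact HasDerivWithinAt.fun_sum fun i _ =>
    (hasDerivWithinAt_pi.1 hv i).mul (hasDerivWithinAt_pi.1 hw i)

lemma HasDerivWithinAt.dotProduct_mulVec (M : Matrix n n ℝ) {v w : ℝ → n → ℝ} {v' w' : n → ℝ}
    {s : Set ℝ} {t : ℝ} (hv : HasDerivWithinAt v v' s t) (hw : HasDerivWithinAt w w' s t) :
    HasDerivWithinAt (fun τ => v τ ⬝ᵥ (M *ᵥ w τ)) (v' ⬝ᵥ (M *ᵥ w t) + v t ⬝ᵥ (M *ᵥ w')) s t :=
  hv.dotProduct (M.mulVecLin.toContinuousLinearMap.hasFDerivAt.comp_hasDerivWithinAt t hw)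

lemma ContinuousOn.hasDerivWithinAt_integral_Icc {E : Type*} [NormedAddCommGroup E]
    [NormedSpace ℝ E] [CompleteSpace E] {g : ℝ → E} {a b t : ℝ} (hg : ContinuousOn g (Icc a b))
    (ht : t ∈ Icc a b) :
    HasDerivWithinAt (fun τ => ∫ s in a..τ, g s) (g t) (Icc a b) t := by
  have : Fact (t ∈ Icc a b) := ⟨ht⟩
  exact intervalIntegral.integral_hasDerivWithinAt_right
    (hg.mono (uIcc_subset_Icc (left_mem_Icc.2 (ht.1.trans ht.2)) ht)).intervalIntegrable
    (hg.stronglyMeasurableAtFilter_nhdsWithin measurableSet_Icc t) (hg t ht)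

end Calculus

open Real in
theorem le_exp_mul_add_integral_of_hasDerivWithinAt_le {φ φ' g : ℝ → ℝ} {K T : ℝ}
    (hφ : ∀ x ∈ Icc 0 T, HasDerivWithinAt φ (φ' x) (Icc 0 T) x)
    (hg : ContinuousOn g (Icc 0 T)) (hle : ∀ x ∈ Icc 0 T, φ' x ≤ K * φ x + g x) :
    ∀ t ∈ Icc 0 T, φ t ≤ exp (K * t) * (φ 0 + ∫ s in 0..t, exp (-(K * s)) * g s) := by
  intro t ht
  have hG : ContinuousOn (fun s => exp (-(K * s)) * g s) (Icc 0 T) := by fun_prop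
  have hψ : ∀ x ∈ Icc 0 T, HasDerivWithinAt
      (fun x => exp (-(K * x)) * φ x - ∫ s in 0..x, exp (-(K * s)) * g s)
      (exp (-(K * x)) * (φ' x - K * φ x - g x)) (Icc 0 T) x := by
    intro x hx
    have hexp : HasDerivAt (fun x => exp (-(K * x))) (exp (-(K * x)) * -K) x := by
      simpa using ((hasDerivAt_id x).const_mul K).neg.exp
    exact ((hexp.hasDerivWithinAt.mul (hφ x hx)).sub
      (hG.hasDerivWithinAt_integral_Icc hx)).congr_deriv (by ring)
  have hanti := antitoneOn_of_hasDerivWithinAt_nonpos (convex_Icc 0 T)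
    (fun x hx => (hψ x hx).continuousWithinAt)
    (fun x hx => (hψ x (interior_subset hx)).mono interior_subset)
    (fun x hx => mul_nonpos_of_nonneg_of_nonpos (exp_pos _).le
      (by linarith [hle x (interior_subset hx)]))
  have hψt := hanti ⟨le_rfl, ht.1.trans ht.2⟩ ht ht.1
  simp only [mul_zero, neg_zero, exp_zero, one_mul, intervalIntegral.integral_same,
    sub_zero] at hψt
  calc φ t = exp (K * t) * (exp (-(K * t)) * φ t) := by
        rw [← mul_assoc, ← exp_add, add_neg_cancel, exp_zero, one_mul]
    _ ≤ _ := mul_le_mul_of_nonneg_left (by linarith) (exp_pos _).le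

lemma galerkin_energy_le {n : Type*} [Fintype n] {C L : Matrix n n ℝ} (hC : C.PosSemidef)
    (hL : L.PosSemidef) {e e' ρ ρ' : n → ℝ}
    (horth : e ⬝ᵥ (C *ᵥ (e' - ρ') + L *ᵥ (e - ρ)) = 0) :
    2 * (e ⬝ᵥ (C *ᵥ e')) + e ⬝ᵥ (L *ᵥ e) ≤
      e ⬝ᵥ (C *ᵥ e) + (ρ' ⬝ᵥ (C *ᵥ ρ') + ρ ⬝ᵥ (L *ᵥ ρ)) := by
  have hCρ' := hC.two_mul_dotProduct_mulVec_le e ρ'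
  have hLρ := hL.two_mul_dotProduct_mulVec_le e ρ
  simp only [mulVec_sub, dotProduct_add, dotProduct_sub] at horth
  linarith

open Real in
theorem galerkin_energy_estimate {n : Type*} [Fintype n] {C L : Matrix n n ℝ}
    (hC : C.PosSemidef) (hL : L.PosSemidef) {T : ℝ} {e e' ρ ρ' : ℝ → n → ℝ}
    (he : ∀ x ∈ Icc 0 T, HasDerivWithinAt e (e' x) (Icc 0 T) x)
    (hρ : ContinuousOn ρ (Icc 0 T)) (hρ' : ContinuousOn ρ' (Icc 0 T))
    (horth : ∀ x ∈ Icc 0 T, e x ⬝ᵥ (C *ᵥ (e' x - ρ' x) + L *ᵥ (e x - ρ x)) = 0) :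
    ∀ t ∈ Icc 0 T, e t ⬝ᵥ (C *ᵥ e t) + ∫ s in 0..t, e s ⬝ᵥ (L *ᵥ e s) ≤
      exp t * (e 0 ⬝ᵥ (C *ᵥ e 0) +
        ∫ s in 0..t, (ρ' s ⬝ᵥ (C *ᵥ ρ' s) + ρ s ⬝ᵥ (L *ᵥ ρ s))) := by
  intro t ht
  have he_cont : ContinuousOn e (Icc 0 T) := fun x hx => (he x hx).continuousWithinAt
  have hg_cont : ContinuousOn (fun s => ρ' s ⬝ᵥ (C *ᵥ ρ' s) + ρ s ⬝ᵥ (L *ᵥ ρ s)) (Icc 0 T) := by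
    fun_prop
  have hderiv : ∀ x ∈ Icc 0 T, HasDerivWithinAt
      (fun x => e x ⬝ᵥ (C *ᵥ e x) + ∫ s in 0..x, e s ⬝ᵥ (L *ᵥ e s))
      (2 * (e x ⬝ᵥ (C *ᵥ e' x)) + e x ⬝ᵥ (L *ᵥ e x)) (Icc 0 T) x := by
    intro x hx
    have hLe : ContinuousOn (fun s => e s ⬝ᵥ (L *ᵥ e s)) (Icc 0 T) := by fun_prop
    refine (((he x hx).dotProduct_mulVec C (he x hx)).add
      (hLe.hasDerivWithinAt_integral_Icc hx)).congr_deriv ?_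
    rw [hC.isHermitian.dotProduct_mulVec_comm (e' x)]
    ring
  have hbound : ∀ x ∈ Icc 0 T, 2 * (e x ⬝ᵥ (C *ᵥ e' x)) + e x ⬝ᵥ (L *ᵥ e x) ≤
      1 * (e x ⬝ᵥ (C *ᵥ e x) + ∫ s in 0..x, e s ⬝ᵥ (L *ᵥ e s)) +
        (ρ' x ⬝ᵥ (C *ᵥ ρ' x) + ρ x ⬝ᵥ (L *ᵥ ρ x)) := by
    intro x hx
    have hint : 0 ≤ ∫ s in 0..x, e s ⬝ᵥ (L *ᵥ e s) := intervalIntegral.integral_nonneg hx.1 fun s _ =>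
      hL.dotProduct_mulVec_self_nonneg (e s)
    linarith [galerkin_energy_le hC hL (horth x hx)]
  have hweight : ∫ s in 0..t, exp (-s) * (ρ' s ⬝ᵥ (C *ᵥ ρ' s) + ρ s ⬝ᵥ (L *ᵥ ρ s)) ≤
      ∫ s in 0..t, (ρ' s ⬝ᵥ (C *ᵥ ρ' s) + ρ s ⬝ᵥ (L *ᵥ ρ s)) := by
    have hg_cont' := hg_cont.mono (Icc_subset_Icc_right ht.2)
    refine intervalIntegral.integral_mono_on ht.1
      (ContinuousOn.intervalIntegrable_of_Icc ht.1 (by fun_prop))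
      (hg_cont'.intervalIntegrable_of_Icc ht.1) fun s hs => ?_
    refine mul_le_of_le_one_left ?_ (exp_le_one_iff.2 (by linarith [hs.1]))
    exact add_nonneg (hC.dotProduct_mulVec_self_nonneg _) (hL.dotProduct_mulVec_self_nonneg _)
  have hgron := le_exp_mul_add_integral_of_hasDerivWithinAt_le hderiv hg_cont hbound t ht
  simp only [one_mul, intervalIntegral.integral_same, add_zero] at hgron
  exact hgron.trans (mul_le_mul_of_nonneg_left (by linarith) (exp_pos t).le)

theorem galerkin_semidiscrete_error_estimate_general (N : ℕ)
    (C L : Matrix (Fin N) (Fin N) ℝ) (hC : C.PosDef) (hL : L.PosSemidef)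
    (V : Submodule ℝ (Fin N → ℝ)) (T : ℝ)
    (f u u' ums ums' : ℝ → Fin N → ℝ)
    (hu' : ContinuousOn u' (Set.Icc 0 T))
    (huderiv : ∀ t ∈ Set.Icc (0 : ℝ) T, HasDerivWithinAt u (u' t) (Set.Icc 0 T) t)
    (hueq : ∀ t ∈ Set.Icc (0 : ℝ) T, C *ᵥ u' t + L *ᵥ u t = f t)
    (humsderiv : ∀ t ∈ Set.Icc (0 : ℝ) T, HasDerivWithinAt ums (ums' t) (Set.Icc 0 T) t)
    (humsmem : ∀ t ∈ Set.Icc (0 : ℝ) T, ums t ∈ V)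
    (hgal : ∀ t ∈ Set.Icc (0 : ℝ) T, ∀ v ∈ V,
      v ⬝ᵥ (C *ᵥ ums' t + L *ᵥ ums t - f t) = 0) :
    ∀ (w w' : ℝ → Fin N → ℝ),
      ContinuousOn w' (Set.Icc 0 T) →
      (∀ t ∈ Set.Icc (0 : ℝ) T, HasDerivWithinAt w (w' t) (Set.Icc 0 T) t) →
      (∀ t ∈ Set.Icc (0 : ℝ) T, w t ∈ V) →
      ∀ t ∈ Set.Icc (0 : ℝ) T,
        (u t - ums t) ⬝ᵥ (C *ᵥ (u t - ums t)) +
            (∫ s in (0 : ℝ)..t, (u s - ums s) ⬝ᵥ (L *ᵥ (u s - ums s))) ≤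
          2 * Real.exp t *
              ((w 0 - ums 0) ⬝ᵥ (C *ᵥ (w 0 - ums 0)) +
                ∫ s in (0 : ℝ)..t,
                  ((w' s - u' s) ⬝ᵥ (C *ᵥ (w' s - u' s)) +
                    (w s - u s) ⬝ᵥ (L *ᵥ (w s - u s)))) +
            2 * ((w t - u t) ⬝ᵥ (C *ᵥ (w t - u t))) +
              2 * ∫ s in (0 : ℝ)..t, (w s - u s) ⬝ᵥ (L *ᵥ (w s - u s)) := by
  intro w w' hw' hw hwV t ht
  have hu : ContinuousOn u (Icc 0 T) := fun x hx => (huderiv x hx).continuousWithinAt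
  have hums : ContinuousOn ums (Icc 0 T) := fun x hx => (humsderiv x hx).continuousWithinAt
  have hw_cont : ContinuousOn w (Icc 0 T) := fun x hx => (hw x hx).continuousWithinAt
  have horth : ∀ x ∈ Icc 0 T, (w x - ums x) ⬝ᵥ (C *ᵥ ((w' x - ums' x) - (w' x - u' x)) +
      L *ᵥ ((w x - ums x) - (w x - u x))) = 0 := by
    intro x hx
    have h := hgal x hx _ (V.sub_mem (hwV x hx) (humsmem x hx))
    rw [← hueq x hx] at h
    have hres : C *ᵥ (u' x - ums' x) + L *ᵥ (u x - ums x) =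
        -(C *ᵥ ums' x + L *ᵥ ums x - (C *ᵥ u' x + L *ᵥ u x)) := by
      simp only [mulVec_sub]
      abel
    rw [sub_sub_sub_cancel_left, sub_sub_sub_cancel_left, hres, dotProduct_neg, h, neg_zero]
  have henergy := galerkin_energy_estimate hC.posSemidef hL
    (fun x hx => (hw x hx).sub (humsderiv x hx)) (hw_cont.sub hu) (hw'.sub hu') horth t ht
  have hC_split := hC.posSemidef.dotProduct_mulVec_sub_self_le (w t - ums t) (w t - u t)
  have hL_split := hL.integral_dotProduct_mulVec_sub_self_le ht.1
    ((hw_cont.sub hums).mono (Icc_subset_Icc_right ht.2))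
    ((hw_cont.sub hu).mono (Icc_subset_Icc_right ht.2))
  rw [sub_sub_sub_cancel_left] at hC_split
  simp only [Pi.sub_apply, sub_sub_sub_cancel_left] at henergy hL_split
  linarith

/-- Error estimate of the Galerkin (multiscale) semi-discrete solution:
for every continuously differentiable `w : [0,T] → V` and every `t ∈ [0,T]`,
`‖u(t) − u_ms(t)‖_C² + ∫_0^t ‖u(s) − u_ms(s)‖_L² ds ≤
2 e^t (‖w(0) − u_ms(0)‖_C² + ∫_0^t (‖w'(s) − u'(s)‖_C² + ‖w(s) − u(s)‖_L²) ds)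
+ 2 ‖w(t) − u(t)‖_C² + 2 ∫_0^t ‖w(s) − u(s)‖_L² ds`. -/
theorem galerkin_semidiscrete_error_estimate (N : ℕ) (hN : 1 ≤ N)
    (C L : Matrix (Fin N) (Fin N) ℝ) (hC : C.PosDef) (hL : L.PosSemidef)
    (V : Submodule ℝ (Fin N → ℝ)) (T : ℝ) (hT : 0 < T)
    (f u u' ums ums' : ℝ → Fin N → ℝ)
    (hf : ContinuousOn f (Set.Icc 0 T))
    (hu' : ContinuousOn u' (Set.Icc 0 T))
    (huderiv : ∀ t ∈ Set.Icc (0 : ℝ) T, HasDerivWithinAt u (u' t) (Set.Icc 0 T) t)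
    (hueq : ∀ t ∈ Set.Icc (0 : ℝ) T, C *ᵥ u' t + L *ᵥ u t = f t)
    (hums' : ContinuousOn ums' (Set.Icc 0 T))
    (humsderiv : ∀ t ∈ Set.Icc (0 : ℝ) T, HasDerivWithinAt ums (ums' t) (Set.Icc 0 T) t)
    (humsmem : ∀ t ∈ Set.Icc (0 : ℝ) T, ums t ∈ V)
    (hgal : ∀ t ∈ Set.Icc (0 : ℝ) T, ∀ v ∈ V,
      v ⬝ᵥ (C *ᵥ ums' t + L *ᵥ ums t - f t) = 0) :
    ∀ (w w' : ℝ → Fin N → ℝ),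
      ContinuousOn w' (Set.Icc 0 T) →
      (∀ t ∈ Set.Icc (0 : ℝ) T, HasDerivWithinAt w (w' t) (Set.Icc 0 T) t) →
      (∀ t ∈ Set.Icc (0 : ℝ) T, w t ∈ V) →
      ∀ t ∈ Set.Icc (0 : ℝ) T,
        (u t - ums t) ⬝ᵥ (C *ᵥ (u t - ums t)) +
            (∫ s in (0 : ℝ)..t, (u s - ums s) ⬝ᵥ (L *ᵥ (u s - ums s))) ≤
          2 * Real.exp t *
              ((w 0 - ums 0) ⬝ᵥ (C *ᵥ (w 0 - ums 0)) +
                ∫ s in (0 : ℝ)..t,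
                  ((w' s - u' s) ⬝ᵥ (C *ᵥ (w' s - u' s)) +
                    (w s - u s) ⬝ᵥ (L *ᵥ (w s - u s)))) +
            2 * ((w t - u t) ⬝ᵥ (C *ᵥ (w t - u t))) +
              2 * ∫ s in (0 : ℝ)..t, (w s - u s) ⬝ᵥ (L *ᵥ (w s - u s)) :=
  galerkin_semidiscrete_error_estimate_general N C L hC hL V T f u u' ums ums' hu' huderiv hueq
    humsderiv humsmem hgal
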